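/- Let $\triangle_n$ be the unit simplex in $\mathbb{R}^n$ ($n \ge 2$) and let $s \in \mathbb{R}^n$ be a nonzero vector that is neither a scalar multiple of any standard unit vector $e_j$ nor a scalar multiple of the all-ones vector $\mathbf{1}$. Then $\int_{\triangle_n} e^{-i s \cdot x/\lambda}\,dx = O(\lambda^2)$ as $\lambda \to 0^+$. -/

import Mathlib

/-!
Write `F ξ R` for the Fourier transform `∫_{R △_n} e^{-i ξ·x} dx` of the dilated simplex; the
integral in the theorem is `F (s / λ) 1`. Integrating out one coordinate `x_p = y` gives
`F ξ R = ∫₀^R e^{-i ξ_p y} F (ξ without ξ_p) (R - y) dy`, an average of lower-dimensional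
transforms against a unimodular phase over an interval of length `R ≤ 1`. So a bound on `[0, 1]`
for the transform in a subset of the coordinates (in any order) bounds the whole transform.

If `s` is not a multiple of some `e_j` or of `𝟙`, it has two distinct nonzero entries `a ≠ b`, or
entries `a, a, 0`. The transforms of `(a, b) / λ` and of `(0, a, a) / λ` are computed in closed
form; each term carries at least two reciprocal frequencies `λ / a`, `λ / b`, `λ / (a - b)`, which
gives `O(λ²)`.
-/

open MeasureTheory Set Function Complex

def solidSimplex (n : ℕ) (R : ℝ) : Set (Fin n → ℝ) := {x | ∑ i, x i ≤ R ∧ ∀ i, 0 ≤ x i}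

noncomputable def simplexFourier {n : ℕ} (ξ : Fin n → ℝ) (R : ℝ) : ℂ :=
  ∫ x in solidSimplex n R, exp (-I * ↑(∑ i, ξ i * x i))

lemma norm_exp_neg_I_mul_ofReal (t : ℝ) : ‖exp (-I * t)‖ = 1 := by
  rw [neg_mul, ← mul_neg, ← ofReal_neg, norm_exp_I_mul_ofReal]

lemma norm_neg_I_mul_ofReal (γ : ℝ) : ‖-I * γ‖ = |γ| := by simp

lemma norm_exp_neg_I_mul_sub_one_le (t : ℝ) : ‖exp (-I * t) - 1‖ ≤ 2 :=
  (norm_sub_le _ _).trans (by rw [norm_exp_neg_I_mul_ofReal, norm_one]; norm_num)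

lemma isClosed_solidSimplex (n : ℕ) (R : ℝ) : IsClosed (solidSimplex n R) := by
  rw [solidSimplex, ofPred_and, ofPred_forall]
  exact (isClosed_le (by fun_prop) continuous_const).inter
    (isClosed_iInter fun i => isClosed_le continuous_const (continuous_apply i))

lemma volume_solidSimplex_lt_top (n : ℕ) (R : ℝ) : volume (solidSimplex n R) < ⊤ := by
  have hsub : solidSimplex n R ⊆ univ.pi fun _ => Icc 0 R := fun x hx i _ =>
    ⟨hx.2 i, (Finset.single_le_sum (fun j _ => hx.2 j) (Finset.mem_univ i)).trans hx.1⟩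
  refine (measure_mono hsub).trans_lt ?_
  simp [Real.volume_Icc_pi]

lemma simplexFourier_comp_equiv {m n : ℕ} (ξ : Fin n → ℝ) (e : Fin m ≃ Fin n) (R : ℝ) :
    simplexFourier (ξ ∘ e) R = simplexFourier ξ R := by
  have hmp := volume_measurePreserving_piCongrLeft (fun _ : Fin n => ℝ) e
  set φ := MeasurableEquiv.piCongrLeft (fun _ : Fin n => ℝ) e
  have hφ : ∀ x i, φ x (e i) = x i := MeasurableEquiv.piCongrLeft_apply_apply (β := fun _ => ℝ) e
  have hsum : ∀ (g : Fin n → ℝ → ℝ) x, ∑ j, g j (φ x j) = ∑ i, g (e i) (x i) := fun g x => by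
    rw [← e.sum_comp]; simp only [hφ]
  have hpre : φ ⁻¹' solidSimplex n R = solidSimplex m R := by
    ext x
    simp only [solidSimplex, mem_preimage, mem_ofPred_eq]
    rw [hsum fun _ t => t, ← e.forall_congr_right]
    simp only [hφ]
  rw [simplexFourier, simplexFourier, ← hpre, ← hmp.setIntegral_preimage_emb φ.measurableEmbedding]
  simp only [hsum fun j t => ξ j * t, comp_apply]

lemma setIntegral_prod_of_mem_iff {α β E : Type*} [MeasurableSpace α] [MeasurableSpace β]
    [NormedAddCommGroup E] [NormedSpace ℝ E] {μ : Measure α} {ν : Measure β} [SFinite μ]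
    [SFinite ν] {T : Set (α × β)} {A : Set α} {S : α → Set β}
    (hT : ∀ q, q ∈ T ↔ q.1 ∈ A ∧ q.2 ∈ S q.1) (hTm : MeasurableSet T) (hAm : MeasurableSet A)
    (hSm : ∀ y, MeasurableSet (S y)) {G : α × β → E} (hG : IntegrableOn G T (μ.prod ν)) :
    ∫ q in T, G q ∂μ.prod ν = ∫ y in A, ∫ z in S y, G (y, z) ∂ν ∂μ := by
  have hfibre : ∀ y, ∫ z, T.indicator G (y, z) ∂ν =
      A.indicator (fun y => ∫ z in S y, G (y, z) ∂ν) y := by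
    intro y
    by_cases hy : y ∈ A
    · rw [indicator_of_mem hy, ← integral_indicator (hSm y)]
      congr 1; funext z
      by_cases hz : z ∈ S y
      · rw [indicator_of_mem ((hT (y, z)).2 ⟨hy, hz⟩), indicator_of_mem hz]
      · rw [indicator_of_notMem (fun h => hz ((hT (y, z)).1 h).2), indicator_of_notMem hz]
    · rw [indicator_of_notMem hy]
      exact integral_eq_zero_of_ae
        (ae_of_all _ fun z => indicator_of_notMem (fun h => hy ((hT (y, z)).1 h).1) _)
  rw [← integral_indicator hTm, integral_prod _ ((integrable_indicator_iff hTm).2 hG),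
    ← integral_indicator hAm]
  simp only [hfibre]

lemma insertNth_mem_solidSimplex_iff {n : ℕ} (p : Fin (n + 1)) (y : ℝ) (z : Fin n → ℝ)
    (R : ℝ) : p.insertNth y z ∈ solidSimplex (n + 1) R ↔
      y ∈ Icc 0 R ∧ z ∈ solidSimplex n (R - y) := by
  simp only [solidSimplex, mem_ofPred_eq, Fin.sum_univ_succAbove _ p, p.forall_iff_succAbove,
    Fin.insertNth_apply_same, Fin.insertNth_apply_succAbove, mem_Icc]
  constructor
  · rintro ⟨hs, hy, hz⟩
    have := Finset.sum_nonneg fun i (_ : i ∈ Finset.univ) => hz i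
    exact ⟨⟨hy, by linarith⟩, by linarith, hz⟩
  · rintro ⟨⟨hy, -⟩, hs, hz⟩
    exact ⟨by linarith, hy, hz⟩

lemma simplexFourier_succ {n : ℕ} (ξ : Fin (n + 1) → ℝ) (p : Fin (n + 1)) {R : ℝ} (hR : 0 ≤ R) :
    simplexFourier ξ R =
      ∫ y in (0:ℝ)..R, exp (-I * ↑(ξ p * y)) * simplexFourier (ξ ∘ p.succAbove) (R - y) := by
  have hmp := (volume_preserving_piFinSuccAbove (fun _ : Fin (n + 1) => ℝ) p).symm
  set e := MeasurableEquiv.piFinSuccAbove (fun _ : Fin (n + 1) => ℝ) p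
  have he : ∀ q, e.symm q = p.insertNth q.1 q.2 := fun _ => rfl
  set T := e.symm ⁻¹' solidSimplex (n + 1) R
  have hTm : MeasurableSet T := e.symm.measurable (isClosed_solidSimplex _ _).measurableSet
  let G : ℝ × (Fin n → ℝ) → ℂ := fun q =>
    exp (-I * ↑(ξ p * q.1)) * exp (-I * ↑(∑ i, ξ (p.succAbove i) * q.2 i))
  have hG : ∀ q, exp (-I * ↑(∑ i, ξ i * e.symm q i)) = G q := fun q => by
    rw [he, Fin.sum_univ_succAbove _ p]
    simp only [Fin.insertNth_apply_same, Fin.insertNth_apply_succAbove, ofReal_add, mul_add,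
      exp_add, G]
  have hGint : IntegrableOn G T := by
    refine Measure.integrableOn_of_bounded (M := 1) ?_
      (by fun_prop : Continuous G).aestronglyMeasurable (ae_of_all _ fun q => ?_)
    · rw [hmp.measure_preimage (isClosed_solidSimplex _ _).measurableSet.nullMeasurableSet]
      exact (volume_solidSimplex_lt_top _ _).ne
    · simp only [G, norm_mul, norm_exp_neg_I_mul_ofReal, mul_one, le_refl]
  calc simplexFourier ξ R = ∫ q in T, G q := by
        rw [simplexFourier, ← hmp.setIntegral_preimage_emb e.symm.measurableEmbedding]
        simp only [hG]
        rfl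
    _ = ∫ y in Icc 0 R, ∫ z in solidSimplex n (R - y), G (y, z) :=
        setIntegral_prod_of_mem_iff
          (fun q => by rw [mem_preimage, he, insertNth_mem_solidSimplex_iff]) hTm measurableSet_Icc (fun _ => (isClosed_solidSimplex _ _).measurableSet) hGint
    _ = _ := by
        simp only [G, integral_const_mul]
        rw [intervalIntegral.integral_of_le hR, integral_Icc_eq_integral_Ioc]
        rfl

lemma norm_simplexFourier_le_of_succAbove {n : ℕ} (ξ : Fin (n + 1) → ℝ) (p : Fin (n + 1))
    {B : ℝ} (hB : ∀ R ∈ Icc (0:ℝ) 1, ‖simplexFourier (ξ ∘ p.succAbove) R‖ ≤ B) :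
    ∀ R ∈ Icc (0:ℝ) 1, ‖simplexFourier ξ R‖ ≤ B := by
  rintro R ⟨hR0, hR1⟩
  have hB0 : 0 ≤ B := (norm_nonneg _).trans (hB 0 ⟨le_rfl, zero_le_one⟩)
  rw [simplexFourier_succ ξ p hR0]
  calc _ ≤ B * |R - 0| := intervalIntegral.norm_integral_le_of_norm_le_const fun y hy => by
          rw [uIoc_of_le hR0] at hy
          rw [norm_mul, norm_exp_neg_I_mul_ofReal, one_mul]
          exact hB _ ⟨by linarith [hy.2], by linarith [hy.1]⟩
    _ ≤ B := by rw [sub_zero, abs_of_nonneg hR0]; nlinarith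

lemma norm_simplexFourier_le_of_injective {m n : ℕ} {ξ : Fin n → ℝ} {f : Fin m → Fin n}
    (hf : Injective f) {B : ℝ} (hB : ∀ R ∈ Icc (0:ℝ) 1, ‖simplexFourier (ξ ∘ f) R‖ ≤ B) :
    ∀ R ∈ Icc (0:ℝ) 1, ‖simplexFourier ξ R‖ ≤ B := by
  induction n with
  | zero =>
    intro R hR
    rw [← simplexFourier_comp_equiv ξ (.ofBijective f ⟨hf, fun i => i.elim0⟩)]
    exact hB R hR
  | succ n ih =>
    by_cases hsurj : Surjective f
    · intro R hR
      rw [← simplexFourier_comp_equiv ξ (.ofBijective f ⟨hf, hsurj⟩)]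
      exact hB R hR
    obtain ⟨p, hp⟩ := not_forall.1 hsurj
    choose g hg using fun i => Fin.exists_succAbove_eq fun h => hp ⟨i, h⟩
    have hfg : f = p.succAbove ∘ g := funext fun i => (hg i).symm
    subst hfg
    exact norm_simplexFourier_le_of_succAbove ξ p (ih hf.of_comp hB)

lemma simplexFourier_vecCons {n : ℕ} (α : ℝ) (η : Fin n → ℝ) {R : ℝ} (hR : 0 ≤ R) :
    simplexFourier (Matrix.vecCons α η) R =
      ∫ y in (0:ℝ)..R, exp (-I * ↑(α * y)) * simplexFourier η (R - y) := by
  rw [simplexFourier_succ _ 0 hR, Fin.succAbove_zero]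
  rfl

lemma simplexFourier_of_fin_zero (ξ : Fin 0 → ℝ) {R : ℝ} (hR : 0 ≤ R) :
    simplexFourier ξ R = 1 := by
  simp [simplexFourier, solidSimplex, hR, Measure.real, volume_pi]

lemma hasDerivAt_exp_neg_I_mul (α u : ℝ) :
    HasDerivAt (fun u : ℝ => exp (-I * ↑(α * u))) (-I * α * exp (-I * ↑(α * u))) u := by
  have := (((hasDerivAt_id u).ofReal_comp).const_mul (-I * α)).cexp
  simpa [mul_comm, mul_assoc, mul_left_comm] using this

lemma integral_exp_neg_I_mul {γ : ℝ} (hγ : γ ≠ 0) (R : ℝ) :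
    ∫ y in (0:ℝ)..R, exp (-I * ↑(γ * y)) = (exp (-I * ↑(γ * R)) - 1) / (-I * γ) := by
  have hc : -I * (γ : ℂ) ≠ 0 := by simp [hγ]
  simp only [ofReal_mul, ← mul_assoc]
  rw [integral_exp_mul_complex hc]
  simp

lemma norm_integral_exp_neg_I_mul_le {γ : ℝ} (hγ : γ ≠ 0) (R : ℝ) :
    ‖∫ y in (0:ℝ)..R, exp (-I * ↑(γ * y))‖ ≤ 2 / |γ| := by
  rw [integral_exp_neg_I_mul hγ, norm_div, norm_neg_I_mul_ofReal]
  gcongr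
  exact norm_exp_neg_I_mul_sub_one_le _

lemma simplexFourier_singleton {γ : ℝ} (hγ : γ ≠ 0) {R : ℝ} (hR : 0 ≤ R) :
    simplexFourier ![γ] R = (exp (-I * ↑(γ * R)) - 1) / (-I * γ) := by
  rw [simplexFourier_vecCons γ _ hR, ← integral_exp_neg_I_mul hγ]
  refine intervalIntegral.integral_congr fun y hy => ?_
  rw [uIcc_of_le hR] at hy
  simp only [simplexFourier_of_fin_zero _ (sub_nonneg.2 hy.2), mul_one]

lemma norm_simplexFourier_pair_le {α β : ℝ} (hα : α ≠ 0) (hβ : β ≠ 0) (hαβ : α ≠ β) {R : ℝ}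
    (hR : 0 ≤ R) : ‖simplexFourier ![α, β] R‖ ≤ (2 / |α - β| + 2 / |α|) / |β| := by
  have key : simplexFourier ![α, β] R = (exp (-I * ↑(β * R)) *
      (∫ y in (0:ℝ)..R, exp (-I * ↑((α - β) * y))) - ∫ y in (0:ℝ)..R, exp (-I * ↑(α * y))) /
        (-I * β) := by
    rw [simplexFourier_vecCons α _ hR, ← intervalIntegral.integral_const_mul,
      ← intervalIntegral.integral_sub (by apply Continuous.intervalIntegrable; fun_prop)
        (by apply Continuous.intervalIntegrable; fun_prop), ← intervalIntegral.integral_div]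
    refine intervalIntegral.integral_congr fun y hy => ?_
    rw [uIcc_of_le hR] at hy
    rw [simplexFourier_singleton hβ (sub_nonneg.2 hy.2), mul_div_assoc', mul_sub, mul_one]
    congr 2
    rw [← exp_add, ← exp_add]
    congr 1
    push_cast
    ring
  rw [key, norm_div, norm_neg_I_mul_ofReal]
  gcongr
  refine (norm_sub_le _ _).trans (add_le_add ?_ (norm_integral_exp_neg_I_mul_le hα R))
  rw [norm_mul, norm_exp_neg_I_mul_ofReal, one_mul]
  exact norm_integral_exp_neg_I_mul_le (sub_ne_zero.2 hαβ) R

lemma simplexFourier_pair_self {α : ℝ} (hα : α ≠ 0) {t : ℝ} (ht : 0 ≤ t) :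
    simplexFourier ![α, α] t =
      (t * exp (-I * ↑(α * t)) - (exp (-I * ↑(α * t)) - 1) / (-I * α)) / (-I * α) := by
  have hint : ∀ y ∈ uIcc 0 t, exp (-I * ↑(α * y)) * simplexFourier ![α] (t - y) =
      (exp (-I * ↑(α * t)) - exp (-I * ↑(α * y))) / (-I * α) := fun y hy => by
    rw [uIcc_of_le ht] at hy
    rw [simplexFourier_singleton hα (sub_nonneg.2 hy.2), mul_div_assoc', mul_sub, mul_one]
    congr 2
    rw [← exp_add]
    congr 1
    push_cast
    ring
  rw [simplexFourier_vecCons α _ ht, intervalIntegral.integral_congr hint,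
    intervalIntegral.integral_div, intervalIntegral.integral_sub intervalIntegrable_const
      (by apply Continuous.intervalIntegrable; fun_prop), intervalIntegral.integral_const,
    integral_exp_neg_I_mul hα, sub_zero, real_smul]

lemma simplexFourier_triple_zero_self_self {α : ℝ} (hα : α ≠ 0) {R : ℝ} (hR : 0 ≤ R) :
    simplexFourier ![0, α, α] R = (R * exp (-I * ↑(α * R)) + R) / (-I * α) ^ 2 -
      2 * (exp (-I * ↑(α * R)) - 1) / (-I * α) ^ 3 := by
  have hα' : (α : ℂ) ≠ 0 := ofReal_ne_zero.2 hα
  have hderiv : ∀ u : ℝ, HasDerivAt (fun u : ℝ => (u * exp (-I * ↑(α * u)) + u) / (-I * α) ^ 2 -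
      2 * exp (-I * ↑(α * u)) / (-I * α) ^ 3)
      ((u * exp (-I * ↑(α * u)) - (exp (-I * ↑(α * u)) - 1) / (-I * α)) / (-I * α)) u := by
    intro u
    have hu : HasDerivAt (fun u : ℝ => (u : ℂ)) 1 u := (hasDerivAt_id u).ofReal_comp
    have he := hasDerivAt_exp_neg_I_mul α u
    refine ((((hu.mul he).add hu).div_const ((-I * α) ^ 2)).sub
      ((he.const_mul 2).div_const ((-I * α) ^ 3))).congr_deriv ?_
    field_simp
    ring
  rw [simplexFourier_vecCons 0 _ hR]
  simp only [zero_mul, ofReal_zero, mul_zero, exp_zero, one_mul]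
  rw [intervalIntegral.integral_comp_sub_left (fun u => simplexFourier ![α, α] u), sub_self,
    sub_zero, intervalIntegral.integral_congr
      fun u hu => simplexFourier_pair_self hα (by rw [uIcc_of_le hR] at hu; exact hu.1),
    intervalIntegral.integral_eq_sub_of_hasDerivAt (fun u _ => hderiv u)
      (by apply Continuous.intervalIntegrable; fun_prop)]
  simp only [ofReal_zero, mul_zero, exp_zero, zero_mul, zero_add]
  ring

lemma norm_simplexFourier_triple_zero_self_self_le {α : ℝ} (hα : 1 ≤ |α|) {R : ℝ}
    (hR : R ∈ Icc (0:ℝ) 1) :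
    ‖simplexFourier ![0, α, α] R‖ ≤ 6 / α ^ 2 := by
  have hα0 : α ≠ 0 := abs_pos.1 (one_pos.trans_le hα)
  have h1 : ‖(R * exp (-I * ↑(α * R)) + R) / (-I * α) ^ 2‖ ≤ 2 / |α| ^ 2 := by
    rw [norm_div, norm_pow, norm_neg_I_mul_ofReal]
    gcongr
    refine (norm_add_le _ _).trans ?_
    rw [norm_mul, norm_exp_neg_I_mul_ofReal, mul_one, norm_real, Real.norm_of_nonneg hR.1]
    linarith [hR.2]
  have h2 : ‖2 * (exp (-I * ↑(α * R)) - 1) / (-I * α) ^ 3‖ ≤ 4 / |α| ^ 2 := by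
    rw [norm_div, norm_mul, norm_pow, norm_neg_I_mul_ofReal, Complex.norm_two]
    calc 2 * ‖exp (-I * ↑(α * R)) - 1‖ / |α| ^ 3 ≤ 2 * 2 / |α| ^ 2 := by
          gcongr
          · exact norm_exp_neg_I_mul_sub_one_le _
          · norm_num
      _ = 4 / |α| ^ 2 := by norm_num
  rw [simplexFourier_triple_zero_self_self hα0 hR.1]
  calc _ ≤ 2 / |α| ^ 2 + 4 / |α| ^ 2 := (norm_sub_le _ _).trans (add_le_add h1 h2)
    _ = 6 / α ^ 2 := by rw [sq_abs]; ring

lemma norm_simplexFourier_div_le_of_ne {n : ℕ} {s : Fin n → ℝ} {j k : Fin n} (hj : s j ≠ 0)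
    (hk : s k ≠ 0) (hjk : s j ≠ s k) {lam : ℝ} (hlam : 0 < lam) :
    ‖simplexFourier (fun i => s i / lam) 1‖ ≤ (2 / |s j - s k| + 2 / |s j|) / |s k| * lam ^ 2 := by
  have hf : Injective ![j, k] := by
    simpa using fun h : j = k => hjk (congrArg s h)
  refine norm_simplexFourier_le_of_injective hf (fun R hR => ?_) 1 ⟨zero_le_one, le_rfl⟩
  have hcomp : (fun i => s i / lam) ∘ ![j, k] = ![s j / lam, s k / lam] := by
    ext i; fin_cases i <;> rfl
  rw [hcomp]
  refine (norm_simplexFourier_pair_le (div_ne_zero hj hlam.ne') (div_ne_zero hk hlam.ne')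
    (fun h => hjk ((div_left_inj' hlam.ne').1 h)) hR.1).trans (le_of_eq ?_)
  rw [← sub_div, abs_div, abs_div, abs_div, abs_of_pos hlam]
  field_simp

lemma norm_simplexFourier_div_le_of_eq_of_eq_zero {n : ℕ} {s : Fin n → ℝ} {j k m : Fin n}
    (hjk : j ≠ k) (hj : s j ≠ 0) (hkj : s k = s j) (hm : s m = 0) {lam : ℝ} (hlam : 0 < lam)
    (hlam' : lam ≤ |s j|) :
    ‖simplexFourier (fun i => s i / lam) 1‖ ≤ 6 / s j ^ 2 * lam ^ 2 := by
  have hf : Injective ![m, j, k] := by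
    have hmj : m ≠ j := fun h => hj (h ▸ hm)
    have hmk : m ≠ k := fun h => hj (hkj ▸ h ▸ hm)
    refine Fin.cons_injective_iff.2 ⟨?_, by simpa using hjk⟩
    simp [hmj, hmk]
  refine norm_simplexFourier_le_of_injective hf (fun R hR => ?_) 1 ⟨zero_le_one, le_rfl⟩
  have hcomp : (fun i => s i / lam) ∘ ![m, j, k] = ![0, s j / lam, s j / lam] := by
    ext i; fin_cases i <;> simp [hm, hkj]
  rw [hcomp]
  refine (norm_simplexFourier_triple_zero_self_self_le ?_ hR).trans (le_of_eq ?_)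
  · rw [abs_div, abs_of_pos hlam, one_le_div hlam]
    exact hlam'
  · field_simp

lemma exists_ne_or_exists_eq_and_zero {n : ℕ} {s : Fin n → ℝ} (hs : s ≠ 0)
    (h1 : ∀ (c : ℝ) (j : Fin n), s ≠ c • (fun i => if i = j then (1:ℝ) else 0))
    (h2 : ∀ c : ℝ, s ≠ fun _ => c) :
    (∃ j k, s j ≠ 0 ∧ s k ≠ 0 ∧ s j ≠ s k) ∨
      ∃ j k m, j ≠ k ∧ s j ≠ 0 ∧ s k = s j ∧ s m = 0 := by
  obtain ⟨j, hj⟩ : ∃ j, s j ≠ 0 := by simpa [funext_iff] using hs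
  by_cases hA : ∃ k, s k ≠ 0 ∧ s j ≠ s k
  · obtain ⟨k, hk, hjk⟩ := hA
    exact .inl ⟨j, k, hj, hk, hjk⟩
  push Not at hA
  obtain ⟨m, hm⟩ : ∃ m, s m = 0 := by
    by_contra! h
    exact h2 (s j) (funext fun i => (hA i (h i)).symm)
  obtain ⟨k, hjk, hk⟩ : ∃ k, j ≠ k ∧ s k = s j := by
    by_contra! h
    refine h1 (s j) j (funext fun i => ?_)
    by_cases hij : i = j
    · simp [hij]
    · by_contra hi
      exact h i (Ne.symm hij) (hA i (by simpa [hij] using hi)).symm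
  exact .inr ⟨j, k, m, hjk, hj, hk, hm⟩

theorem stmt_5_general (n : ℕ) (s : Fin n → ℝ) (hs : s ≠ 0)
    (h1 : ∀ (c : ℝ) (j : Fin n), s ≠ c • (fun i => if i = j then (1:ℝ) else 0))
    (h2 : ∀ c : ℝ, s ≠ fun _ => c) :
    ∃ C > (0:ℝ), ∃ lam0 > (0:ℝ), ∀ lam : ℝ, 0 < lam → lam < lam0 →
      ‖(∫ x in {x : Fin n → ℝ | (∑ i, x i) ≤ 1 ∧ ∀ i, 0 ≤ x i},
          Complex.exp (-Complex.I * (((∑ i, s i * x i) / lam : ℝ) : ℂ)))‖ ≤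
        C * lam ^ 2 := by
  have hF : ∀ lam, (∫ x in {x : Fin n → ℝ | (∑ i, x i) ≤ 1 ∧ ∀ i, 0 ≤ x i},
      Complex.exp (-Complex.I * (((∑ i, s i * x i) / lam : ℝ) : ℂ))) =
        simplexFourier (fun i => s i / lam) 1 := fun lam => by
    simp only [simplexFourier, solidSimplex, Finset.sum_div, div_mul_eq_mul_div]
  rcases exists_ne_or_exists_eq_and_zero hs h1 h2 with
    ⟨j, k, hj, hk, hjk⟩ | ⟨j, k, m, hjk, hj, hkj, hm⟩
  · have hjk' : s j - s k ≠ 0 := sub_ne_zero.2 hjk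
    refine ⟨(2 / |s j - s k| + 2 / |s j|) / |s k|, by positivity, 1, one_pos,
      fun lam hlam _ => ?_⟩
    rw [hF]
    exact norm_simplexFourier_div_le_of_ne hj hk hjk hlam
  · refine ⟨6 / s j ^ 2, by positivity, |s j|, abs_pos.2 hj, fun lam hlam hlam' => ?_⟩
    rw [hF]
    exact norm_simplexFourier_div_le_of_eq_of_eq_zero hjk hj hkj hm hlam hlam'.le

/-- If `s ≠ 0` is neither a scalar multiple of a standard unit vector nor of the
all-ones vector, then the Fourier transform of the unit simplex is `O(λ²)` as `λ → 0⁺`. -/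
theorem stmt_5 (n : ℕ) (hn : 2 ≤ n) (s : Fin n → ℝ) (hs : s ≠ 0)
    (h1 : ∀ (c : ℝ) (j : Fin n), s ≠ c • (fun i => if i = j then (1:ℝ) else 0))
    (h2 : ∀ c : ℝ, s ≠ fun _ => c) :
    ∃ C > (0:ℝ), ∃ lam0 > (0:ℝ), ∀ lam : ℝ, 0 < lam → lam < lam0 →
      ‖(∫ x in {x : Fin n → ℝ | (∑ i, x i) ≤ 1 ∧ ∀ i, 0 ≤ x i},
          Complex.exp (-Complex.I * (((∑ i, s i * x i) / lam : ℝ) : ℂ)))‖ ≤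
        C * lam ^ 2 :=
  stmt_5_general n s hs h1 h2
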